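/- arXiv:2210.15209 — 4 statements merged into one kernel-verified Lean document; each statement's English description precedes it below -/
import Mathlib

section
/- Let γ and σ be timing functions of length n. A reverse chronological sequence of mixed moves (s_n,d_n,n)(s_{n−1},d_{n−1},n−1)⋯(s_1,d_1,1) aligns γ to σ if and only if, setting s_0 = 0, for every i ∈ {1,…,n}: f_σ(i) = f_γ(i) + s_i + d_i − s_{i−1}, where f denotes the flow function. -/
open Finset

namespace TimedAlign

variable {n : ℕ}

/-- The stamp move `stamp(γ, x, i)`: shift the timestamp at position `i` by `x`. -/
def stamp (γ : Fin n → ℝ) (x : ℝ) (i : Fin n) : Fin n → ℝ :=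
  fun j => if j = i then γ j + x else γ j

/-- The delay move `delay(γ, x, i)`: shift all timestamps at positions `≥ i` by `x`. -/
def delay (γ : Fin n → ℝ) (x : ℝ) (i : Fin n) : Fin n → ℝ :=
  fun j => if i ≤ j then γ j + x else γ j

/-- The mixed move `(s, d, i)`: a delay move followed by a stamp move at the same position. -/
def mixed (s d : ℝ) (i : Fin n) (γ : Fin n → ℝ) : Fin n → ℝ :=
  stamp (delay γ d i) s i

/-- The timestamp preceding position `i` (with the convention `τ(0) = 0`). -/
def prev (τ : Fin n → ℝ) (i : Fin n) : ℝ :=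
  if (i : ℕ) = 0 then 0
  else τ ⟨(i : ℕ) - 1, lt_of_le_of_lt (Nat.sub_le _ _) i.isLt⟩

/-- The flow function of a timing function: `f_τ(1) = τ(1)`, `f_τ(i) = τ(i) - τ(i-1)`. -/
def flow (τ : Fin n → ℝ) (i : Fin n) : ℝ := τ i - prev τ i

/-- Elementary moves: stamp moves and delay moves. -/
inductive Move (n : ℕ) where
  | stampM (x : ℝ) (i : Fin n)
  | delayM (x : ℝ) (i : Fin n)

def Move.apply : Move n → (Fin n → ℝ) → (Fin n → ℝ)
  | .stampM x i, γ => stamp γ x i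
  | .delayM x i, γ => delay γ x i

def Move.cost : Move n → ℝ
  | .stampM x _ => |x|
  | .delayM x _ => |x|

/-- Apply a sequence of moves `m₁ m₂ ⋯ m_k`, with `m₁` first. -/
def applySeq (ms : List (Move n)) (γ : Fin n → ℝ) : Fin n → ℝ :=
  ms.foldl (fun τ m => m.apply τ) γ

/-- The cost of a sequence of moves is the sum of the costs of its moves. -/
def seqCost (ms : List (Move n)) : ℝ := (ms.map Move.cost).sum

/-- The mixed-moves distance `d_N`: the minimum cost over all finite sequences of
stamp and delay moves aligning `τ₁` to `τ₂`. -/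
noncomputable def dN (τ₁ τ₂ : Fin n → ℝ) : ℝ :=
  sInf {c : ℝ | ∃ ms : List (Move n), applySeq ms τ₁ = τ₂ ∧ seqCost ms = c}

/-- Apply the chronological sequence of mixed moves `(s₁,d₁,1)(s₂,d₂,2)⋯(s_n,d_n,n)`,
in increasing order of positions. -/
def chronApply (s d : Fin n → ℝ) (γ : Fin n → ℝ) : Fin n → ℝ :=
  (List.finRange n).foldl (fun τ i => mixed (s i) (d i) i τ) γ

/-- Apply the reverse chronological sequence `(s_n,d_n,n)⋯(s₁,d₁,1)`,
in decreasing order of positions. -/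
def revChronApply (s d : Fin n → ℝ) (γ : Fin n → ℝ) : Fin n → ℝ :=
  (List.finRange n).reverse.foldl (fun τ i => mixed (s i) (d i) i τ) γ

/-- The cost of a (reverse) chronological sequence of mixed moves. -/
def chronCost (s d : Fin n → ℝ) : ℝ := ∑ i, (|s i| + |d i|)

/-- A sequence of mixed moves is co-operative if each move has `s·d ≥ 0`. -/
def Cooperative (s d : Fin n → ℝ) : Prop := ∀ i, 0 ≤ s i * d i

/-- The move at the last position is a pure delay (`s_n = 0`). -/
def LastStampZero (s : Fin n → ℝ) : Prop := ∀ i : Fin n, (i : ℕ) + 1 = n → s i = 0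

/-- Cross co-operation: `s_i · d_{i+1} ≤ 0` for all `i < n`. -/
def CrossCooperative (s d : Fin n → ℝ) : Prop :=
  ∀ i : Fin n, ∀ h : (i : ℕ) + 1 < n, s i * d ⟨(i : ℕ) + 1, h⟩ ≤ 0

/-- The stable choice of stamp given error `e` at the current position and
residual `r` at the next position. -/
noncomputable def stableStamp (e r : ℝ) : ℝ :=
  if 0 ≤ e * r then 0 else if |e| < |r| then e else -r

/-- Stability of the stamp components of a reverse chronological co-operative run
aligning `γ` to `σ`: writing `e_i = f_σ(i) - f_γ(i)` and `r_{i+1} = e_{i+1} - s_{i+1}`,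
`s_i = 0` if `e_i·r_{i+1} ≥ 0`, `s_i = e_i` if moreover `|e_i| < |r_{i+1}|`,
and `s_i = -r_{i+1}` otherwise. -/
def Stable (γ σ s : Fin n → ℝ) : Prop :=
  ∀ i : Fin n, ∀ h : (i : ℕ) + 1 < n,
    s i = stableStamp (flow σ i - flow γ i)
      ((flow σ ⟨(i : ℕ) + 1, h⟩ - flow γ ⟨(i : ℕ) + 1, h⟩) - s ⟨(i : ℕ) + 1, h⟩)

/-- `s_{i-1}`, with the convention `s₀ = 0`. -/
def sprev (s : Fin n → ℝ) (i : Fin n) : ℝ :=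
  if (i : ℕ) = 0 then 0
  else s ⟨(i : ℕ) - 1, lt_of_le_of_lt (Nat.sub_le _ _) i.isLt⟩

lemma fold_pt (s d : Fin n → ℝ) (L : List (Fin n)) (γ : Fin n → ℝ) (j : Fin n) :
    (L.foldl (fun τ i => mixed (s i) (d i) i τ) γ) j
      = γ j + (L.map (fun i =>
          (if j = i then s i else 0) + (if i ≤ j then d i else 0))).sum := by
  induction L generalizing γ with
  | nil => simp
  | cons a L ih =>
    simp only [List.foldl_cons, ih, List.map_cons, List.sum_cons]
    have h : mixed (s a) (d a) a γ j
        = γ j + ((if j = a then s a else 0) + (if a ≤ j then d a else 0)) := by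
      simp only [mixed, stamp, delay]
      split_ifs <;> ring
    rw [h]; ring

lemma revChron_pt (s d γ : Fin n → ℝ) (j : Fin n) :
    revChronApply s d γ j = γ j + s j + ∑ i, (if i ≤ j then d i else 0) := by
  rw [revChronApply, fold_pt, List.map_reverse, List.sum_reverse, ← Fin.sum_univ_def,
    Finset.sum_add_distrib, Finset.sum_ite_eq]
  simp; ring

lemma sum_le_zero (d : Fin n → ℝ) (h : 0 < n) :
    (∑ i, if i ≤ (⟨0, h⟩ : Fin n) then d i else 0) = d ⟨0, h⟩ := by
  have e : ∀ i : Fin n, (if i ≤ (⟨0, h⟩ : Fin n) then d i else 0)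
      = if (⟨0, h⟩ : Fin n) = i then d i else 0 := by
    intro i
    simp only [Fin.le_def, Fin.ext_iff]
    split_ifs
    all_goals try ring1
    all_goals (exfalso; omega)
  rw [Finset.sum_congr rfl (fun i _ => e i), Finset.sum_ite_eq]
  simp

lemma sum_le_succ (d : Fin n → ℝ) (k : ℕ) (h : k + 1 < n) :
    (∑ i, if i ≤ (⟨k + 1, h⟩ : Fin n) then d i else 0)
      = (∑ i, if i ≤ (⟨k, Nat.lt_of_succ_lt h⟩ : Fin n) then d i else 0)
        + d ⟨k + 1, h⟩ := by
  have e : ∀ i : Fin n, (if i ≤ (⟨k + 1, h⟩ : Fin n) then d i else 0)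
      = (if i ≤ (⟨k, Nat.lt_of_succ_lt h⟩ : Fin n) then d i else 0)
        + (if (⟨k + 1, h⟩ : Fin n) = i then d i else 0) := by
    intro i
    simp only [Fin.le_def, Fin.ext_iff]
    split_ifs
    all_goals try ring1
    all_goals (exfalso; omega)
  rw [Finset.sum_congr rfl (fun i _ => e i), Finset.sum_add_distrib,
    Finset.sum_ite_eq]
  simp

lemma flowT (s d γ : Fin n → ℝ) (i : Fin n) :
    flow (revChronApply s d γ) i = flow γ i + s i + d i - sprev s i := by
  rcases i with ⟨k, hk⟩
  cases k with
  | zero =>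
    simp [flow, prev, sprev, revChron_pt, sum_le_zero]
  | succ m =>
    have hne : (m : ℕ) + 1 ≠ 0 := Nat.succ_ne_zero m
    simp only [flow, prev, sprev, if_neg hne, revChron_pt, Nat.add_sub_cancel,
      sum_le_succ]
    ring

/-- a reverse chronological sequence of mixed moves aligns `γ` to `σ` iff
`f_σ(i) = f_γ(i) + s_i + d_i - s_{i-1}` for every `i` (with `s₀ = 0`). -/
theorem statement3 (n : ℕ) (γ σ s d : Fin n → ℝ) :
    revChronApply s d γ = σ ↔
      ∀ i : Fin n, flow σ i = flow γ i + s i + d i - sprev s i := by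
  constructor
  · intro h i
    rw [← h]
    exact flowT s d γ i
  · intro h
    funext j
    rcases j with ⟨k, hk⟩
    induction k with
    | zero =>
      have h0 := h ⟨0, hk⟩
      have hT := flowT s d γ ⟨0, hk⟩
      simp [flow, prev] at h0 hT
      linarith
    | succ m ih =>
      have h0 := h ⟨m + 1, hk⟩
      have hT := flowT s d γ ⟨m + 1, hk⟩
      have hne : (m : ℕ) + 1 ≠ 0 := Nat.succ_ne_zero m
      simp only [flow, prev, if_neg hne, Nat.add_sub_cancel] at h0 hT
      have hm := ih (Nat.lt_of_succ_lt hk)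
      linarith [hm]

end TimedAlign
end

section
/- For any two timing functions γ and σ of length n, there exists a chronological sequence of mixed moves aligning γ to σ whose cost equals d_N(γ, σ); likewise, there exists a reverse chronological sequence aligning γ to σ whose cost equals d_N(γ, σ). -/
open Finset

namespace TimedAlign

variable {n : ℕ}

/-! ### Auxiliary machinery -/

/-- Cumulative sum of `d` up to position `j`. -/
def cum (d : Fin n → ℝ) (j : Fin n) : ℝ := ∑ i, if i ≤ j then d i else 0

/-- Effect of a single move, as an additive shift. -/
def Move.eff : Move n → Fin n → ℝ
  | .stampM x i => fun j => if j = i then x else 0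
  | .delayM x i => fun j => if i ≤ j then x else 0

lemma Move.apply_eq (m : Move n) (τ : Fin n → ℝ) :
    m.apply τ = fun j => τ j + m.eff j := by
  cases m with
  | stampM x i => funext j; simp only [Move.apply, Move.eff, stamp]; split <;> simp
  | delayM x i => funext j; simp only [Move.apply, Move.eff, delay]; split <;> simp

/-- Total effect of a sequence of moves. -/
def effSum (ms : List (Move n)) (j : Fin n) : ℝ := (ms.map fun m => m.eff j).sum

lemma applySeq_eq (ms : List (Move n)) (γ : Fin n → ℝ) :
    applySeq ms γ = fun j => γ j + effSum ms j := by
  induction ms generalizing γ with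
  | nil => simp [applySeq, effSum]
  | cons m ms ih =>
      have h : applySeq (m :: ms) γ = applySeq ms (m.apply γ) := rfl
      rw [h, ih, Move.apply_eq]
      funext j
      simp [effSum]
      ring

/-- Stamp coefficient of a move at a position. -/
def Move.sc : Move n → Fin n → ℝ
  | .stampM x i => fun j => if j = i then x else 0
  | .delayM _ _ => fun _ => 0

/-- Delay coefficient of a move at a position. -/
def Move.dc : Move n → Fin n → ℝ
  | .delayM x i => fun j => if j = i then x else 0
  | .stampM _ _ => fun _ => 0

lemma Move.eff_eq (m : Move n) (j : Fin n) :
    m.eff j = m.sc j + cum m.dc j := by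
  cases m with
  | stampM x i => simp [Move.eff, Move.sc, Move.dc, cum]
  | delayM x i =>
      simp only [Move.eff, Move.sc, Move.dc, cum, zero_add]
      have h : ∀ i' : Fin n, (if i' ≤ j then (if i' = i then x else 0) else 0)
          = (if i' = i then (if i ≤ j then x else 0) else 0) := by
        intro i'
        by_cases h' : i' = i
        · subst h'; simp
        · simp [h']
      rw [Finset.sum_congr rfl fun i' _ => h i', Finset.sum_ite_eq']
      simp

/-- Total stamp coefficient of a sequence at each position. -/
def Stot (ms : List (Move n)) (i : Fin n) : ℝ := (ms.map fun m => m.sc i).sum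

/-- Total delay coefficient of a sequence at each position. -/
def Dtot (ms : List (Move n)) (i : Fin n) : ℝ := (ms.map fun m => m.dc i).sum

lemma cum_add (a b : Fin n → ℝ) (j : Fin n) :
    cum (fun i => a i + b i) j = cum a j + cum b j := by
  unfold cum
  rw [← Finset.sum_add_distrib]
  refine Finset.sum_congr rfl fun i _ => ?_
  split_ifs <;> simp

lemma effSum_eq (ms : List (Move n)) (j : Fin n) :
    effSum ms j = Stot ms j + cum (Dtot ms) j := by
  induction ms with
  | nil => simp [effSum, Stot, Dtot, cum]
  | cons m ms ih =>
      have h1 : effSum (m :: ms) j = m.eff j + effSum ms j := by simp [effSum]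
      have h2 : Stot (m :: ms) j = m.sc j + Stot ms j := by simp [Stot]
      have h3 : cum (Dtot (m :: ms)) j = cum m.dc j + cum (Dtot ms) j := by
        rw [show Dtot (m :: ms) = fun i => m.dc i + Dtot ms i from by
          funext i; simp [Dtot]]
        exact cum_add _ _ j
      rw [h1, h2, h3, ih, Move.eff_eq]
      ring

lemma move_cost_eq (m : Move n) : ∑ i, (|m.sc i| + |m.dc i|) = m.cost := by
  cases m with
  | stampM x i =>
      simp [Move.sc, Move.dc, Move.cost, apply_ite abs, Finset.sum_ite_eq']
  | delayM x i =>
      simp [Move.sc, Move.dc, Move.cost, apply_ite abs, Finset.sum_ite_eq']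

lemma seqCost_lower (ms : List (Move n)) :
    ∑ i, (|Stot ms i| + |Dtot ms i|) ≤ seqCost ms := by
  induction ms with
  | nil => simp [Stot, Dtot, seqCost]
  | cons m ms ih =>
      have h2 : seqCost (m :: ms) = m.cost + seqCost ms := by simp [seqCost]
      rw [h2]
      calc ∑ i, (|Stot (m :: ms) i| + |Dtot (m :: ms) i|)
          ≤ ∑ i, ((|m.sc i| + |m.dc i|) + (|Stot ms i| + |Dtot ms i|)) := by
            refine Finset.sum_le_sum fun i _ => ?_
            have hs : Stot (m :: ms) i = m.sc i + Stot ms i := by simp [Stot]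
            have hd : Dtot (m :: ms) i = m.dc i + Dtot ms i := by simp [Dtot]
            rw [hs, hd]
            have h1 := abs_add_le (m.sc i) (Stot ms i)
            have h2 := abs_add_le (m.dc i) (Dtot ms i)
            linarith
        _ = m.cost + ∑ i, (|Stot ms i| + |Dtot ms i|) := by
            rw [Finset.sum_add_distrib, move_cost_eq]
        _ ≤ m.cost + seqCost ms := by linarith

lemma mixed_eq (s d : ℝ) (i : Fin n) (γ : Fin n → ℝ) :
    mixed s d i γ
      = fun j => γ j + ((if i ≤ j then d else 0) + (if j = i then s else 0)) := by
  funext j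
  simp only [mixed, stamp, delay]
  by_cases h : j = i
  · subst h; simp; ring
  · simp [h]
    split_ifs <;> simp

lemma foldl_mixed (s d : Fin n → ℝ) (l : List (Fin n)) (γ : Fin n → ℝ) :
    l.foldl (fun τ i => mixed (s i) (d i) i τ) γ
      = fun j => γ j
          + (l.map fun i => (if i ≤ j then d i else 0) + (if j = i then s i else 0)).sum := by
  induction l generalizing γ with
  | nil => simp
  | cons a l ih =>
      rw [List.foldl_cons, ih, mixed_eq]
      funext j
      simp
      ring

lemma sum_mixed_eq (s d : Fin n → ℝ) (j : Fin n) :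
    ((List.finRange n).map
        fun i => (if i ≤ j then d i else 0) + (if j = i then s i else 0)).sum
      = s j + cum d j := by
  rw [← Fin.sum_univ_def]
  rw [Finset.sum_add_distrib]
  have h1 : ∑ i, (if j = i then s i else 0) = s j := by
    rw [Finset.sum_ite_eq]; simp
  rw [h1]
  unfold cum
  ring

lemma chronApply_eq (s d : Fin n → ℝ) (γ : Fin n → ℝ) :
    chronApply s d γ = fun j => γ j + (s j + cum d j) := by
  rw [chronApply, foldl_mixed]
  funext j
  rw [sum_mixed_eq]

lemma revChronApply_eq (s d : Fin n → ℝ) (γ : Fin n → ℝ) :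
    revChronApply s d γ = fun j => γ j + (s j + cum d j) := by
  rw [revChronApply, foldl_mixed]
  funext j
  rw [List.map_reverse, List.sum_reverse, sum_mixed_eq]

/-- The list of elementary moves realizing a chronological run over positions `l`. -/
def pairList (s d : Fin n → ℝ) : List (Fin n) → List (Move n)
  | [] => []
  | i :: l => Move.delayM (d i) i :: Move.stampM (s i) i :: pairList s d l

lemma applySeq_pairList (s d : Fin n → ℝ) (l : List (Fin n)) (γ : Fin n → ℝ) :
    applySeq (pairList s d l) γ = l.foldl (fun τ i => mixed (s i) (d i) i τ) γ := by
  induction l generalizing γ with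
  | nil => rfl
  | cons a l ih =>
      have h : applySeq (pairList s d (a :: l)) γ
          = applySeq (pairList s d l) (mixed (s a) (d a) a γ) := rfl
      rw [h, ih, List.foldl_cons]

lemma seqCost_pairList (s d : Fin n → ℝ) (l : List (Fin n)) :
    seqCost (pairList s d l) = (l.map fun i => |s i| + |d i|).sum := by
  induction l with
  | nil => rfl
  | cons a l ih =>
      have h : seqCost (pairList s d (a :: l))
          = |d a| + (|s a| + seqCost (pairList s d l)) := by
        simp [seqCost, pairList, Move.cost]
      rw [h, ih]
      simp
      ring

/-- The objective function: cost of the chronological run with delays `d` (and forced stamps). -/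
noncomputable def optF (γ σ : Fin n → ℝ) (d : Fin n → ℝ) : ℝ :=
  ∑ j, (|σ j - γ j - cum d j| + |d j|)

lemma optF_nonneg (γ σ d : Fin n → ℝ) : 0 ≤ optF γ σ d :=
  Finset.sum_nonneg fun i _ => by positivity

lemma sum_abs_le_optF (γ σ d : Fin n → ℝ) : ∑ j, |d j| ≤ optF γ σ d := by
  unfold optF
  rw [Finset.sum_add_distrib]
  have h : 0 ≤ ∑ j, |σ j - γ j - cum d j| := Finset.sum_nonneg fun i _ => abs_nonneg _
  linarith

lemma optF_continuous (γ σ : Fin n → ℝ) : Continuous (optF γ σ) := by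
  refine continuous_finset_sum _ fun j _ => ?_
  have hc : Continuous fun d : Fin n → ℝ => cum d j := by
    refine continuous_finset_sum _ fun i _ => ?_
    split_ifs
    · exact continuous_apply i
    · exact continuous_const
  exact ((continuous_const.sub hc).abs).add (continuous_apply j).abs

lemma exists_min (γ σ : Fin n → ℝ) : ∃ d₀ : Fin n → ℝ, ∀ d, optF γ σ d₀ ≤ optF γ σ d := by
  set C := optF γ σ 0 with hCdef
  have hC : 0 ≤ C := optF_nonneg γ σ 0
  have h0mem : (0 : Fin n → ℝ) ∈ Metric.closedBall (0 : Fin n → ℝ) C := by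
    simp [hC]
  obtain ⟨d₀, hd₀K, hmin⟩ :=
    (isCompact_closedBall (0 : Fin n → ℝ) C).exists_isMinOn ⟨0, h0mem⟩
      ((optF_continuous γ σ).continuousOn)
  refine ⟨d₀, fun d => ?_⟩
  by_cases hd : d ∈ Metric.closedBall (0 : Fin n → ℝ) C
  · exact hmin hd
  · have h1 : optF γ σ d₀ ≤ C := hmin h0mem
    have h2 : C < ‖d‖ := by
      simpa [Metric.mem_closedBall, dist_zero_right] using hd
    have h3 : ‖d‖ ≤ ∑ j, |d j| := by
      refine (pi_norm_le_iff_of_nonneg (Finset.sum_nonneg fun j _ => abs_nonneg _)).mpr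
        fun i => ?_
      rw [Real.norm_eq_abs]
      exact Finset.single_le_sum (f := fun j => |d j|) (fun j _ => abs_nonneg _)
        (Finset.mem_univ i)
    have h4 := sum_abs_le_optF γ σ d
    linarith

/-- there is a chronological sequence of mixed moves aligning `γ` to `σ`
of cost `d_N(γ, σ)`, and likewise a reverse chronological one. -/
theorem statement4 (n : ℕ) (γ σ : Fin n → ℝ) :
    (∃ s d : Fin n → ℝ, chronApply s d γ = σ ∧ chronCost s d = dN γ σ) ∧
    (∃ s d : Fin n → ℝ, revChronApply s d γ = σ ∧ chronCost s d = dN γ σ) := by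
  obtain ⟨d₀, hmin⟩ := exists_min γ σ
  set s : Fin n → ℝ := fun j => σ j - γ j - cum d₀ j with hs
  have happly : chronApply s d₀ γ = σ := by
    rw [chronApply_eq]
    funext j
    simp [hs]
  have happly' : revChronApply s d₀ γ = σ := by
    rw [revChronApply_eq]
    funext j
    simp [hs]
  have hcost : chronCost s d₀ = optF γ σ d₀ := by
    simp [chronCost, optF, hs]
  set A : Set ℝ := {c : ℝ | ∃ ms : List (Move n), applySeq ms γ = σ ∧ seqCost ms = c}
    with hA
  have hmem : optF γ σ d₀ ∈ A := by
    refine ⟨pairList s d₀ (List.finRange n), ?_, ?_⟩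
    · rw [applySeq_pairList]
      exact happly
    · rw [seqCost_pairList, ← Fin.sum_univ_def]
      unfold optF
      exact Finset.sum_congr rfl fun j _ => by simp [hs]
  have hlb : ∀ c ∈ A, optF γ σ d₀ ≤ c := by
    rintro c ⟨ms, hms, rfl⟩
    have hS : ∀ j, Stot ms j = σ j - γ j - cum (Dtot ms) j := by
      intro j
      have h1 : applySeq ms γ j = σ j := by rw [hms]
      rw [applySeq_eq] at h1
      simp only at h1
      have h2 := effSum_eq ms j
      linarith
    have heq : optF γ σ (Dtot ms) = ∑ i, (|Stot ms i| + |Dtot ms i|) := by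
      unfold optF
      exact Finset.sum_congr rfl fun j _ => by rw [hS j]
    calc optF γ σ d₀ ≤ optF γ σ (Dtot ms) := hmin _
      _ = ∑ i, (|Stot ms i| + |Dtot ms i|) := heq
      _ ≤ seqCost ms := seqCost_lower ms
  have hdN : dN γ σ = optF γ σ d₀ := by
    refine le_antisymm (csInf_le ⟨optF γ σ d₀, fun c hc => hlb c hc⟩ hmem)
      (le_csInf ⟨optF γ σ d₀, hmem⟩ hlb)
  exact ⟨⟨s, d₀, happly, by rw [hcost, hdN]⟩, ⟨s, d₀, happly', by rw [hcost, hdN]⟩⟩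

end TimedAlign
end

section
/- Let γ and σ be timing functions of length n. For every reverse chronological co-operative sequence of mixed moves m' aligning γ to σ, there exists a reverse chronological, co-operative, and cross co-operative sequence m aligning γ to σ with cost(m) ≤ cost(m'). -/
/-!
Write `e_k = f_σ(k) - f_γ(k)`. A reverse chronological run aligns `γ` to `σ` exactly when
`d_k = e_k + s_{k-1} - s_k` (with `s_0 = 0`), so a run is determined by its stamps and costs
`∑ |s_k| + |e_k + s_{k-1} - s_k|`.

Define residuals backwards by `ρ_{n+1} = 0` and `ρ_k = e_k - s_k`, where the stable stamp `s_k`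
is the point of the segment `[0, -ρ_{k+1}]` closest to `e_k`. Then `s_{k-1} ∈ [0, -ρ_k]`, so
`d_k = ρ_k + s_{k-1} ∈ [0, ρ_k] ⊆ [0, e_k] ∋ s_k`: the run is co-operative and cross
co-operative, `s_n = 0`, and its cost telescopes to `∑ |ρ_k|`. Conversely, for any run the
cancellation `c(r, x) = (|r| + |x| - |r + x|) / 2` satisfies
`|ρ_k| - c(ρ_k, s_{k-1}) + c(ρ_{k+1}, s_k) ≤ |s_k| + |d_k|`, and summing over `k` shows that
every run costs at least `∑ |ρ_k|`.
-/

open Finset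

namespace TimedAlign

variable {n : ℕ}

open scoped Interval

lemma abs_add_abs_sub_eq_of_mem_uIcc {a x : ℝ} (hx : x ∈ [[0, a]]) : |x| + |a - x| = |a| := by
  rw [Set.mem_uIcc] at hx
  rcases hx with ⟨h₀, h₁⟩ | ⟨h₁, h₀⟩
  · rw [abs_of_nonneg h₀, abs_of_nonneg (sub_nonneg.2 h₁), abs_of_nonneg (h₀.trans h₁)]
    ring
  · rw [abs_of_nonpos h₀, abs_of_nonpos (sub_nonpos.2 h₁), abs_of_nonpos (h₁.trans h₀)]
    ring

lemma abs_add_of_mem_uIcc_zero_neg {a x : ℝ} (hx : x ∈ [[0, -a]]) : |a + x| = |a| - |x| := by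
  have h := abs_add_abs_sub_eq_of_mem_uIcc hx
  rw [abs_neg, show -a - x = -(a + x) by ring, abs_neg] at h
  linarith

lemma sub_mem_uIcc_zero {a x : ℝ} (hx : x ∈ [[0, a]]) : a - x ∈ [[0, a]] := by
  rw [Set.mem_uIcc] at hx ⊢
  rcases hx with hx | hx
  · left; constructor <;> linarith
  · right; constructor <;> linarith

lemma add_mem_uIcc_zero_of_mem_uIcc_zero_neg {a x : ℝ} (hx : x ∈ [[0, -a]]) :
    a + x ∈ [[0, a]] := by
  rw [Set.mem_uIcc] at hx ⊢
  rcases hx with hx | hx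
  · right; constructor <;> linarith
  · left; constructor <;> linarith

lemma mul_nonneg_of_mem_uIcc_zero {a x y : ℝ} (hx : x ∈ [[0, a]]) (hy : y ∈ [[0, a]]) :
    0 ≤ x * y := by
  rw [Set.mem_uIcc] at hx hy
  rcases hx with hx | hx <;> rcases hy with hy | hy <;> nlinarith

lemma mul_nonpos_of_mem_uIcc_zero_neg {a x y : ℝ} (hx : x ∈ [[0, -a]]) (hy : y ∈ [[0, a]]) :
    x * y ≤ 0 := by
  rw [Set.mem_uIcc] at hx hy
  rcases hx with hx | hx <;> rcases hy with hy | hy <;> nlinarith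

lemma stableStamp_cases (e r : ℝ) :
    (stableStamp e r = 0 ∧ 0 ∈ [[e, -r]]) ∨ (stableStamp e r = e ∧ e ∈ [[0, -r]]) ∨
      (stableStamp e r = -r ∧ -r ∈ [[0, e]]) := by
  unfold stableStamp
  simp only [Set.mem_uIcc]
  split_ifs with h₁ h₂
  · left
    refine ⟨rfl, ?_⟩
    rcases mul_nonneg_iff.mp h₁ with h | h
    · right; constructor <;> linarith
    · left; constructor <;> linarith
  · right; left
    refine ⟨rfl, ?_⟩
    rcases mul_neg_iff.mp (not_le.mp h₁) with ⟨he, hr⟩ | ⟨he, hr⟩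
    · rw [abs_of_pos he, abs_of_neg hr] at h₂; left; constructor <;> linarith
    · rw [abs_of_neg he, abs_of_pos hr] at h₂; right; constructor <;> linarith
  · right; right
    refine ⟨rfl, ?_⟩
    rcases mul_neg_iff.mp (not_le.mp h₁) with ⟨he, hr⟩ | ⟨he, hr⟩
    · rw [abs_of_pos he, abs_of_neg hr] at h₂; left; constructor <;> linarith
    · rw [abs_of_neg he, abs_of_pos hr] at h₂; right; constructor <;> linarith

lemma stableStamp_mem_uIcc (e r : ℝ) : stableStamp e r ∈ [[0, e]] := by
  rcases stableStamp_cases e r with ⟨hp, h⟩ | ⟨hp, h⟩ | ⟨hp, h⟩ <;> rw [hp]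
  · exact Set.left_mem_uIcc
  · exact Set.right_mem_uIcc
  · exact h

lemma stableStamp_mem_uIcc_neg (e r : ℝ) : stableStamp e r ∈ [[0, -r]] := by
  rcases stableStamp_cases e r with ⟨hp, h⟩ | ⟨hp, h⟩ | ⟨hp, h⟩ <;> rw [hp]
  · exact Set.left_mem_uIcc
  · exact h
  · exact Set.right_mem_uIcc

lemma stableStamp_zero_right (e : ℝ) : stableStamp e 0 = 0 := by
  simp [stableStamp]

lemma abs_sub_stableStamp_add_le (e r x : ℝ) :
    |e - stableStamp e r| + |e - stableStamp e r + x| + |r| ≤ |e + x| + |e + x + r| + |x| := by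
  rcases stableStamp_cases e r with ⟨hp, h⟩ | ⟨hp, h⟩ | ⟨hp, h⟩ <;> rw [hp]
  · have hsplit : |e + r| = |e| + |r| := by
      rw [abs_add_eq_add_abs_iff]
      rw [Set.mem_uIcc] at h
      rcases h with h | h
      · right; constructor <;> linarith
      · left; constructor <;> linarith
    have htri : |e + r| ≤ |e + x + r| + |x| :=
      calc |e + r| = |e + x + r - x| := by congr 1; ring
        _ ≤ |e + x + r| + |x| := abs_sub _ _
    rw [sub_zero]
    linarith
  · have htri : |r| ≤ |e + x + r| + |e + x| :=
      calc |r| = |e + x + r - (e + x)| := by congr 1; ring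
        _ ≤ |e + x + r| + |e + x| := abs_sub _ _
    rw [sub_self, abs_zero, zero_add, zero_add]
    linarith
  · have hsplit := abs_add_abs_sub_eq_of_mem_uIcc h
    have htri : |e| ≤ |e + x| + |x| :=
      calc |e| = |e + x - x| := by congr 1; ring
        _ ≤ |e + x| + |x| := abs_sub _ _
    rw [abs_neg, sub_neg_eq_add] at hsplit
    rw [sub_neg_eq_add, add_right_comm e r x]
    linarith

/- `min |r| |x|` if `r` and `x` have opposite signs, `0` otherwise. -/
noncomputable def cancel (r x : ℝ) : ℝ := (|r| + |x| - |r + x|) / 2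

lemma abs_add_abs_add_le (a b r : ℝ) : |a| + |a + r| ≤ |b| + |b + r| + 2 * |a - b| := by
  have h₁ := abs_sub_abs_le_abs_sub a b
  have h₂ := abs_sub_abs_le_abs_sub (a + r) (b + r)
  rw [add_sub_add_right_eq_sub] at h₂
  linarith

lemma abs_sub_stableStamp_sub_cancel_le (e r x y : ℝ) :
    |e - stableStamp e r| - cancel (e - stableStamp e r) x + cancel r y ≤ |y| + |e + x - y| := by
  have hlip := abs_add_abs_add_le (e + x) y r
  have hcore := abs_sub_stableStamp_add_le e r x
  unfold cancel
  rw [add_comm r y]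
  linarith

section Residual

variable (n : ℕ) (E : ℕ → ℝ)

noncomputable def residual (k : ℕ) : ℝ :=
  if k < n then E k - stableStamp (E k) (residual (k + 1)) else 0
termination_by n - k

lemma residual_of_lt {k : ℕ} (hk : k < n) :
    residual n E k = E k - stableStamp (E k) (residual n E (k + 1)) := by
  rw [residual, if_pos hk]

lemma residual_of_le {k : ℕ} (hk : n ≤ k) : residual n E k = 0 := by
  rw [residual, if_neg (not_lt.2 hk)]

/- Positions are `0, …, n - 1`. A stamp sequence `u` with `u 0 = 0` is stored shifted by one:
`u (k + 1)` is the stamp at position `k` and `u 0` is the convention `s₀ = 0`. -/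
def delays (u : ℕ → ℝ) (k : ℕ) : ℝ := E k + u k - u (k + 1)

def runCost (u : ℕ → ℝ) : ℝ := ∑ k ∈ range n, (|u (k + 1)| + |delays E u k|)

lemma sum_abs_residual_le_runCost (u : ℕ → ℝ) (hu : u 0 = 0) :
    ∑ k ∈ range n, |residual n E k| ≤ runCost n E u := by
  set ρ := residual n E
  -- `cancel (ρ k) (u k)` is a potential vanishing at both ends, so the bound telescopes.
  have hstep : ∀ k ∈ range n,
      |ρ k| + (cancel (ρ (k + 1)) (u (k + 1)) - cancel (ρ k) (u k)) ≤
        |u (k + 1)| + |delays E u k| := by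
    intro k hk
    have := abs_sub_stableStamp_sub_cancel_le (E k) (ρ (k + 1)) (u k) (u (k + 1))
    rw [← residual_of_lt n E (mem_range.1 hk)] at this
    rw [delays]
    linarith
  calc ∑ k ∈ range n, |ρ k|
      = ∑ k ∈ range n, (|ρ k| + (cancel (ρ (k + 1)) (u (k + 1)) - cancel (ρ k) (u k))) := by
        have hρn : ρ n = 0 := residual_of_le n E le_rfl
        rw [sum_add_distrib, sum_range_sub (fun k => cancel (ρ k) (u k)), hρn, hu]
        simp [cancel]
    _ ≤ runCost n E u := sum_le_sum hstep

noncomputable def stableStamps : ℕ → ℝ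
  | 0 => 0
  | k + 1 => stableStamp (E k) (residual n E (k + 1))

lemma stableStamps_mem_uIcc_neg : ∀ k, stableStamps n E k ∈ [[0, -residual n E k]]
  | 0 => Set.left_mem_uIcc
  | _ + 1 => stableStamp_mem_uIcc_neg _ _

lemma stableStamps_self : stableStamps n E n = 0 := by
  cases n with
  | zero => rfl
  | succ n => rw [stableStamps, residual_of_le _ E le_rfl, stableStamp_zero_right]

lemma residual_eq_sub_stableStamps {k : ℕ} (hk : k < n) :
    residual n E k = E k - stableStamps n E (k + 1) :=
  residual_of_lt n E hk

lemma delays_stableStamps {k : ℕ} (hk : k < n) :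
    delays E (stableStamps n E) k = residual n E k + stableStamps n E k := by
  rw [delays, residual_eq_sub_stableStamps n E hk]
  ring

lemma runCost_stableStamps :
    runCost n E (stableStamps n E) = ∑ k ∈ range n, |residual n E k| := by
  set v := stableStamps n E
  have hterm : ∀ k ∈ range n,
      |v (k + 1)| + |delays E v k| = |residual n E k| + (|v (k + 1)| - |v k|) := by
    intro k hk
    rw [delays_stableStamps n E (mem_range.1 hk),
      abs_add_of_mem_uIcc_zero_neg (stableStamps_mem_uIcc_neg n E k)]
    ring
  have hvn : v n = 0 := stableStamps_self n E
  rw [runCost, sum_congr rfl hterm, sum_add_distrib, sum_range_sub (fun k => |v k|), hvn]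
  simp [v, stableStamps]

lemma runCost_stableStamps_le (u : ℕ → ℝ) (hu : u 0 = 0) :
    runCost n E (stableStamps n E) ≤ runCost n E u :=
  runCost_stableStamps n E ▸ sum_abs_residual_le_runCost n E u hu

lemma stableStamps_mul_delays_nonneg {k : ℕ} (hk : k < n) :
    0 ≤ stableStamps n E (k + 1) * delays E (stableStamps n E) k := by
  have hρ : residual n E k ∈ [[0, E k]] := by
    rw [residual_eq_sub_stableStamps n E hk]
    exact sub_mem_uIcc_zero (stableStamp_mem_uIcc _ _)
  refine mul_nonneg_of_mem_uIcc_zero (stableStamp_mem_uIcc _ _) ?_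
  rw [delays_stableStamps n E hk]
  exact Set.uIcc_subset_uIcc_left hρ
    (add_mem_uIcc_zero_of_mem_uIcc_zero_neg (stableStamps_mem_uIcc_neg n E k))

lemma stableStamps_mul_delays_nonpos {k : ℕ} (hk : k < n) :
    stableStamps n E k * delays E (stableStamps n E) k ≤ 0 := by
  refine mul_nonpos_of_mem_uIcc_zero_neg (stableStamps_mem_uIcc_neg n E k) ?_
  rw [delays_stableStamps n E hk]
  exact add_mem_uIcc_zero_of_mem_uIcc_zero_neg (stableStamps_mem_uIcc_neg n E k)

end Residual

lemma mixed_apply (s d : ℝ) (i : Fin n) (γ : Fin n → ℝ) (j : Fin n) :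
    mixed s d i γ j = γ j + ((if j = i then s else 0) + (if i ≤ j then d else 0)) := by
  unfold mixed stamp delay
  by_cases hji : j = i
  · subst hji
    simp only [if_pos le_rfl, if_true]
    ring
  · simp only [hji, if_false]
    split_ifs <;> ring

lemma foldl_mixed_apply (s d : Fin n → ℝ) (l : List (Fin n)) (γ : Fin n → ℝ) (j : Fin n) :
    l.foldl (fun τ i => mixed (s i) (d i) i τ) γ j =
      γ j + (l.map fun i => (if j = i then s i else 0) + (if i ≤ j then d i else 0)).sum := by
  induction l generalizing γ with
  | nil => simp
  | cons i l ih =>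
    rw [List.foldl_cons, ih, mixed_apply, List.map_cons, List.sum_cons]
    ring

lemma revChronApply_apply (s d γ : Fin n → ℝ) (j : Fin n) :
    revChronApply s d γ j = γ j + s j + ∑ i, if i ≤ j then d i else 0 := by
  rw [revChronApply, foldl_mixed_apply, List.map_reverse, List.sum_reverse, ← Fin.sum_univ_def,
    sum_add_distrib, Fintype.sum_ite_eq]
  ring

lemma flow_add (f g : Fin n → ℝ) : flow (f + g) = flow f + flow g := by
  funext i
  simp only [flow, prev, Pi.add_apply]
  split_ifs <;> ring

lemma prev_partialSum (d : Fin n → ℝ) (j : Fin n) :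
    prev (fun j => ∑ i, if i ≤ j then d i else 0) j = ∑ i, if i < j then d i else 0 := by
  unfold prev
  split_ifs with hj
  · exact (sum_eq_zero fun i _ => if_neg (by rw [Fin.lt_def]; omega)).symm
  · refine sum_congr rfl fun i _ => ?_
    simp only [Fin.le_def, Fin.lt_def, Nat.le_sub_one_iff_lt (Nat.pos_of_ne_zero hj)]

lemma flow_partialSum (d : Fin n → ℝ) :
    flow (fun j => ∑ i, if i ≤ j then d i else 0) = d := by
  funext j
  rw [flow, prev_partialSum, ← sum_sub_distrib]
  have hterm : ∀ i, ((if i ≤ j then d i else 0) - if i < j then d i else 0) =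
      if j = i then d i else 0 := by
    intro i
    rcases lt_trichotomy i j with h | rfl | h
    · simp [h.le, h, h.ne']
    · simp
    · simp [not_le.2 h, not_lt.2 h.le, h.ne]
  simp only [hterm, Fintype.sum_ite_eq]

lemma flow_injective : Function.Injective (flow : (Fin n → ℝ) → Fin n → ℝ) := by
  intro f g h
  funext ⟨k, hk⟩
  induction k with
  | zero => simpa [flow, prev] using congrFun h ⟨0, hk⟩
  | succ k ih =>
    have := congrFun h ⟨k + 1, hk⟩
    simp only [flow, prev, Nat.add_sub_cancel, Nat.succ_ne_zero, if_false, ih (by omega)] at this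
    linarith

lemma revChronApply_eq_iff (s d γ σ : Fin n → ℝ) :
    revChronApply s d γ = σ ↔ d = flow σ - flow γ - flow s := by
  have hsplit : revChronApply s d γ = γ + s + fun j => ∑ i, if i ≤ j then d i else 0 :=
    funext (revChronApply_apply s d γ)
  rw [← flow_injective.eq_iff, hsplit, flow_add, flow_add, flow_partialSum, sub_sub,
    eq_sub_iff_add_eq, add_comm d]

lemma flow_shift (u : ℕ → ℝ) (hu : u 0 = 0) (i : Fin n) :
    flow (fun j : Fin n => u (j + 1)) i = u (i + 1) - u i := by
  simp only [flow, prev]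
  split_ifs with hi
  · rw [hi, hu, sub_zero]
  · rw [Nat.sub_add_cancel (Nat.pos_of_ne_zero hi)]

def natExtend (f : Fin n → ℝ) (k : ℕ) : ℝ := if h : k < n then f ⟨k, h⟩ else 0

lemma natExtend_coe (f : Fin n → ℝ) (i : Fin n) : natExtend f i = f i := by
  simp [natExtend]

lemma revChronApply_shift_eq_iff (u : ℕ → ℝ) (hu : u 0 = 0) (d γ σ : Fin n → ℝ) :
    revChronApply (fun i : Fin n => u (i + 1)) d γ = σ ↔
      d = fun i : Fin n => delays (natExtend (flow σ - flow γ)) u i := by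
  have hflow : flow σ - flow γ - flow (fun i : Fin n => u (i + 1)) =
      fun i : Fin n => delays (natExtend (flow σ - flow γ)) u i := by
    funext i
    rw [Pi.sub_apply, flow_shift u hu, delays, natExtend_coe, Pi.sub_apply]
    ring
  rw [revChronApply_eq_iff, hflow]

lemma chronCost_shift (E u : ℕ → ℝ) :
    chronCost (fun i : Fin n => u (i + 1)) (fun i => delays E u i) = runCost n E u :=
  Fin.sum_univ_eq_sum_range (fun k => |u (k + 1)| + |delays E u k|) n

theorem statement7_general (n : ℕ) (γ σ : Fin n → ℝ) (s' d' : Fin n → ℝ)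
    (halign : revChronApply s' d' γ = σ) :
    ∃ s d : Fin n → ℝ, revChronApply s d γ = σ ∧ Cooperative s d ∧
      LastStampZero s ∧ CrossCooperative s d ∧ chronCost s d ≤ chronCost s' d' := by
  let E := natExtend (flow σ - flow γ)
  let v := stableStamps n E
  let u : ℕ → ℝ := fun | 0 => 0 | k + 1 => natExtend s' k
  have hs' : s' = fun i : Fin n => u (i + 1) := funext fun i => (natExtend_coe s' i).symm
  rw [hs', revChronApply_shift_eq_iff u rfl] at halign
  refine ⟨fun i => v (i + 1), fun i => delays E v i,
    (revChronApply_shift_eq_iff v rfl _ γ σ).2 rfl,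
    fun i => stableStamps_mul_delays_nonneg n E i.isLt, fun i hi => ?_,
    fun i hi => stableStamps_mul_delays_nonpos n E hi, ?_⟩
  · show v (i + 1) = 0
    rw [hi]
    exact stableStamps_self n E
  · rw [hs', halign, chronCost_shift, chronCost_shift]
    exact runCost_stableStamps_le n E u rfl

/-- every reverse chronological co-operative run aligning `γ` to `σ` can be
improved to a reverse chronological, co-operative and cross co-operative run (with a pure
delay at the last position) of at most the same cost. -/
theorem statement7 (n : ℕ) (γ σ : Fin n → ℝ) (s' d' : Fin n → ℝ)
    (halign : revChronApply s' d' γ = σ) (hcoop : Cooperative s' d') :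
    ∃ s d : Fin n → ℝ, revChronApply s d γ = σ ∧ Cooperative s d ∧
      LastStampZero s ∧ CrossCooperative s d ∧ chronCost s d ≤ chronCost s' d' :=
  statement7_general n γ σ s' d' halign

end TimedAlign
end

section
/- Let γ and σ be timing functions of length n and let e_i = f_σ(i) − f_γ(i) for 1 ≤ i ≤ n. Define s_n = 0 and, for i = n−1 down to 1: r_{i+1} = e_{i+1} − s_{i+1}, and s_i = 0 if e_i·r_{i+1} ≥ 0, s_i = e_i if e_i·r_{i+1} < 0 and |e_i| < |r_{i+1}|, s_i = −r_{i+1} otherwise; finally set r_1 = e_1 − s_1. Then the mixed-moves distance satisfies d_N(γ, σ) = Σ_{i=1}^{n} |r_i|. -/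
open Finset

namespace TimedAlign

variable {n : ℕ}

/-- The stamp components of the stable run, computed by downward recursion:
`s_i = 0` for `i` the last position, and `s_i = stableStamp e_i (e_{i+1} - s_{i+1})`. -/
noncomputable def sRec (e : ℕ → ℝ) (n : ℕ) (i : ℕ) : ℝ :=
  if h : n ≤ i + 1 then 0
  else stableStamp (e i) (e (i + 1) - sRec e n (i + 1))
termination_by n - i
decreasing_by omega


set_option maxHeartbeats 1000000

section Aux

noncomputable def rF (z ρ : ℝ) : ℝ := z - stableStamp z ρ

lemma stableStamp_zero (x : ℝ) : stableStamp x 0 = 0 := by simp [stableStamp]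

lemma stableStamp_neg (x ρ : ℝ) : stableStamp (-x) (-ρ) = -stableStamp x ρ := by
  unfold stableStamp
  rw [show (-x) * (-ρ) = x * ρ by ring, abs_neg, abs_neg]
  split_ifs <;> ring

lemma rF_neg (x ρ : ℝ) : rF (-x) (-ρ) = -rF x ρ := by
  unfold rF; rw [stableStamp_neg]; ring

lemma rF_eq (z ρ : ℝ) :
    rF z ρ = if 0 ≤ ρ then max z 0 + min (z + ρ) 0 else min z 0 + max (z + ρ) 0 := by
  unfold rF stableStamp
  rcases abs_cases z with ⟨hz1, hz2⟩ | ⟨hz1, hz2⟩ <;> rcases abs_cases ρ with ⟨hρ1, hρ2⟩ | ⟨hρ1, hρ2⟩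
  all_goals simp only [hz1, hρ1]
  all_goals split_ifs
  all_goals simp [max_def, min_def]
  all_goals split_ifs
  all_goals nlinarith

lemma rF_lower (y ρ u : ℝ) (h : rF y ρ < 0) : -(rF y ρ) - u ≤ |rF (y + u) ρ| := by
  simp only [rF_eq] at h ⊢
  rcases le_or_gt 0 ρ with hρ | hρ
  · simp only [if_pos hρ] at h ⊢
    rcases abs_cases (max (y+u) 0 + min (y+u+ρ) 0) with ⟨h1,h2⟩ | ⟨h1,h2⟩ <;>
      rw [h1] <;>
      rcases le_total (y+u) 0 with h3 | h3 <;> rcases le_total (y+u+ρ) 0 with h4 | h4 <;>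
      rcases le_total y 0 with h5 | h5 <;> rcases le_total (y+ρ) 0 with h6 | h6 <;>
      simp_all [max_def, min_def]
    all_goals first | linarith | linarith [le_abs_self (y+u+ρ), neg_abs_le (y+u+ρ), le_abs_self (y+u), neg_abs_le (y+u), le_abs_self (y+u+(y+u+ρ)), neg_abs_le (y+u+(y+u+ρ)), le_abs_self (y+u+(y+u+ρ)+ρ), neg_abs_le (y+u+(y+u+ρ)+ρ)]
  · simp only [if_neg (not_le.mpr hρ)] at h ⊢
    rcases abs_cases (min (y+u) 0 + max (y+u+ρ) 0) with ⟨h1,h2⟩ | ⟨h1,h2⟩ <;>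
      rw [h1] <;>
      rcases le_total (y+u) 0 with h3 | h3 <;> rcases le_total (y+u+ρ) 0 with h4 | h4 <;>
      rcases le_total y 0 with h5 | h5 <;> rcases le_total (y+ρ) 0 with h6 | h6 <;>
      simp_all [max_def, min_def]
    all_goals first | linarith | linarith [le_abs_self (y+u+ρ), neg_abs_le (y+u+ρ), le_abs_self (y+u), neg_abs_le (y+u), le_abs_self (y+u+(y+u+ρ)), neg_abs_le (y+u+(y+u+ρ)), le_abs_self (y+u+(y+u+ρ)+ρ), neg_abs_le (y+u+(y+u+ρ)+ρ)]

lemma S3 (x u c : ℝ) (hc : 0 < c) :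
    c + |min x 0 + max (x - c) 0| ≤ |u| + |x - u| + max (c - u) 0 := by
  rcases abs_cases u with ⟨h1,h2⟩|⟨h1,h2⟩ <;> rcases abs_cases (x-u) with ⟨h3,h4⟩|⟨h3,h4⟩ <;>
    rcases abs_cases (min x 0 + max (x-c) 0) with ⟨h5,h6⟩|⟨h5,h6⟩ <;>
    rw [h1, h3, h5] <;>
    rcases le_total x 0 with h7|h7 <;> rcases le_total (x-c) 0 with h8|h8 <;>
    rcases le_total (c-u) 0 with h9|h9 <;>
    simp_all [max_def, min_def]
  all_goals first | linarith | (split_ifs at * <;> linarith)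

lemma coreAux (x u y ρ : ℝ) (h : rF y ρ ≤ 0) :
    |rF y ρ| + |rF x (rF y ρ)| ≤ |u| + |x - u| + |rF (y + u) ρ| := by
  rcases eq_or_lt_of_le h with h0 | h0
  · rw [h0]
    have : rF x 0 = x := by rw [rF, stableStamp_zero]; ring
    rw [this]
    have : |x| ≤ |u| + |x - u| := by
      calc |x| = |u + (x - u)| := by ring_nf
        _ ≤ |u| + |x - u| := abs_add_le _ _
    have h4 := abs_nonneg (rF (y + u) ρ)
    simp only [abs_zero]
    linarith
  · have hc : 0 < -(rF y ρ) := by linarith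
    have hform : rF x (rF y ρ) = min x 0 + max (x - -(rF y ρ)) 0 := by
      rw [rF_eq x (rF y ρ), if_neg (not_le.mpr h0)]; ring_nf
    have h1 := S3 x u (-(rF y ρ)) hc
    have h2 := rF_lower y ρ u h0
    have h3 : max (-(rF y ρ) - u) 0 ≤ |rF (y + u) ρ| :=
      max_le h2 (abs_nonneg _)
    rw [abs_of_neg h0, hform]
    calc -(rF y ρ) + |min x 0 + max (x - -(rF y ρ)) 0|
        ≤ |u| + |x - u| + max (-(rF y ρ) - u) 0 := h1
      _ ≤ |u| + |x - u| + |rF (y + u) ρ| := by linarith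

lemma core (x u y ρ : ℝ) :
    |rF y ρ| + |rF x (rF y ρ)| ≤ |u| + |x - u| + |rF (y + u) ρ| := by
  rcases le_or_gt (rF y ρ) 0 with h | h
  · exact coreAux x u y ρ h
  · have h' : rF (-y) (-ρ) ≤ 0 := by rw [rF_neg]; linarith
    have := coreAux (-x) (-u) (-y) (-ρ) h'
    rw [rF_neg, show (-y) + (-u) = -(y+u) by ring, rF_neg] at this
    rw [rF_neg (y+u) ρ] at this
    simpa [abs_neg, abs_sub_comm x u, show -x - -u = -(x - u) by ring] using this

lemma S4 (x ρ : ℝ) : |ρ + stableStamp x ρ| + |stableStamp x ρ| = |ρ| := by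
  unfold stableStamp
  split_ifs with h1 h2
  · simp
  · push_neg at h1
    rcases lt_trichotomy x 0 with hx | hx | hx
    · have hρ : 0 < ρ := by nlinarith
      rw [abs_of_neg hx] at h2
      rw [abs_of_pos hρ] at h2 ⊢
      rw [abs_of_neg hx, abs_of_pos (by linarith : 0 < ρ + x)]
      ring
    · exfalso; rw [hx] at h1; simp at h1
    · have hρ : ρ < 0 := by nlinarith
      rw [abs_of_pos hx] at h2
      rw [abs_of_neg hρ] at h2 ⊢
      rw [abs_of_pos hx, abs_of_neg (by linarith : ρ + x < 0)]
      ring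
  · simp

def effMove (m : Move n) (j : Fin n) : ℝ :=
  match m with
  | .stampM x i => if j = i then x else 0
  | .delayM x i => if i ≤ j then x else 0

def stampPart (m : Move n) (i : Fin n) : ℝ :=
  match m with
  | .stampM x k => if k = i then x else 0
  | .delayM _ _ => 0

def delayPart (m : Move n) (i : Fin n) : ℝ :=
  match m with
  | .stampM _ _ => 0
  | .delayM x k => if k = i then x else 0

def SA (ms : List (Move n)) (i : Fin n) : ℝ := (ms.map (fun m => stampPart m i)).sum
def DA (ms : List (Move n)) (i : Fin n) : ℝ := (ms.map (fun m => delayPart m i)).sum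

lemma SA_cons (m : Move n) (tl : List (Move n)) (i : Fin n) :
    SA (m :: tl) i = stampPart m i + SA tl i := by simp [SA]

lemma DA_cons (m : Move n) (tl : List (Move n)) (i : Fin n) :
    DA (m :: tl) i = delayPart m i + DA tl i := by simp [DA]

lemma apply_eval (m : Move n) (τ : Fin n → ℝ) (j : Fin n) :
    m.apply τ j = τ j + effMove m j := by
  cases m with
  | stampM x i =>
    simp only [Move.apply, stamp, effMove]
    split_ifs <;> simp
  | delayM x i =>
    simp only [Move.apply, delay, effMove]
    split_ifs <;> simp

lemma applySeq_eval (ms : List (Move n)) (γ : Fin n → ℝ) (j : Fin n) :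
    applySeq ms γ j = γ j + (ms.map (fun m => effMove m j)).sum := by
  induction ms generalizing γ with
  | nil => simp [applySeq]
  | cons m tl ih =>
    simp only [applySeq, List.foldl_cons, List.map_cons, List.sum_cons]
    have := ih (m.apply γ)
    simp only [applySeq] at this
    rw [this, apply_eval]; ring

lemma per_move_cost (m : Move n) :
    (∑ i, |stampPart m i|) + (∑ i, |delayPart m i|) = m.cost := by
  cases m with
  | stampM x k =>
    simp [stampPart, delayPart, Move.cost, apply_ite abs, Finset.sum_ite_eq']
  | delayM x k =>
    simp [stampPart, delayPart, Move.cost, apply_ite abs, Finset.sum_ite_eq']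

lemma cost_bound (ms : List (Move n)) :
    (∑ i, |SA ms i|) + (∑ i, |DA ms i|) ≤ seqCost ms := by
  induction ms with
  | nil => simp [SA, DA, seqCost]
  | cons m tl ih =>
    have h1 : ∀ i, |SA (m :: tl) i| ≤ |stampPart m i| + |SA tl i| := by
      intro i; rw [SA_cons]; exact abs_add_le _ _
    have h2 : ∀ i, |DA (m :: tl) i| ≤ |delayPart m i| + |DA tl i| := by
      intro i; rw [DA_cons]; exact abs_add_le _ _
    have hc : seqCost (m :: tl) = m.cost + seqCost tl := by simp [seqCost]
    have hpm := per_move_cost m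
    calc (∑ i, |SA (m :: tl) i|) + (∑ i, |DA (m :: tl) i|)
        ≤ (∑ i, (|stampPart m i| + |SA tl i|)) + (∑ i, (|delayPart m i| + |DA tl i|)) := by
          gcongr with i _ i _
          exacts [h1 i, h2 i]
      _ = ((∑ i, |stampPart m i|) + (∑ i, |delayPart m i|))
          + ((∑ i, |SA tl i|) + (∑ i, |DA tl i|)) := by
          rw [Finset.sum_add_distrib, Finset.sum_add_distrib]; ring
      _ ≤ m.cost + seqCost tl := by rw [hpm]; linarith
      _ = seqCost (m :: tl) := hc.symm

lemma eff_decomp (ms : List (Move n)) (j : Fin n) :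
    (ms.map (fun m => effMove m j)).sum
      = SA ms j + ∑ i ∈ Finset.univ.filter (fun i : Fin n => i ≤ j), DA ms i := by
  induction ms with
  | nil => simp [SA, DA]
  | cons m tl ih =>
    have hm : effMove m j
        = stampPart m j + ∑ i ∈ Finset.univ.filter (fun i : Fin n => i ≤ j), delayPart m i := by
      cases m with
      | stampM x k => simp [effMove, stampPart, delayPart, eq_comm]
      | delayM x k =>
        simp only [effMove, stampPart, delayPart, zero_add]
        rw [Finset.sum_ite_eq]
        simp [Finset.mem_filter]
    simp only [List.map_cons, List.sum_cons, ih, hm, SA_cons]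
    have : ∑ i ∈ Finset.univ.filter (fun i : Fin n => i ≤ j), DA (m :: tl) i
        = (∑ i ∈ Finset.univ.filter (fun i : Fin n => i ≤ j), delayPart m i)
          + ∑ i ∈ Finset.univ.filter (fun i : Fin n => i ≤ j), DA tl i := by
      rw [← Finset.sum_add_distrib]
      exact Finset.sum_congr rfl (fun i _ => DA_cons m tl i)
    rw [this]; ring


lemma sRec_eq (e : ℕ → ℝ) (n : ℕ) (he : ∀ j, n ≤ j → e j = 0) (i : ℕ) :
    sRec e n i = stableStamp (e i) (e (i + 1) - sRec e n (i + 1)) := by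
  rcases le_or_gt n (i + 1) with h | h
  · rw [sRec, dif_pos h, he (i + 1) h]
    rw [sRec, dif_pos (by omega : n ≤ i + 1 + 1), sub_zero, stableStamp_zero]
  · rw [sRec, dif_neg (by omega : ¬ n ≤ i + 1)]

lemma rF_sRec (e : ℕ → ℝ) (n : ℕ) (he : ∀ j, n ≤ j → e j = 0) (i : ℕ) :
    rF (e i) (e (i + 1) - sRec e n (i + 1)) = e i - sRec e n i := by
  rw [rF, sRec_eq e n he i]

lemma tailLB (e : ℕ → ℝ) (n : ℕ) (he : ∀ j, n ≤ j → e j = 0) :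
    ∀ m k, k + 1 + m = n → ∀ (t : ℝ) (a : ℕ → ℝ),
    (∑ j ∈ Finset.Ico (k + 1) n, |e j - sRec e n j|)
      + |rF (e k + t) (e (k + 1) - sRec e n (k + 1))|
    ≤ |a k| + |e k + t - a k|
      + ∑ j ∈ Finset.Ico (k + 1) n, (|a j| + |e j + a (j - 1) - a j|) := by
  intro m
  induction m with
  | zero =>
    intro k hk t a
    have hn : n = k + 1 := by omega
    have h1 : sRec e n (k + 1) = 0 := by rw [sRec, dif_pos (by omega)]
    have h2 : e (k + 1) = 0 := he (k + 1) (by omega)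
    have hemp : Finset.Ico (k + 1) n = ∅ := by rw [hn]; exact Finset.Ico_self _
    rw [hemp, Finset.sum_empty, Finset.sum_empty]
    rw [h1, h2, sub_zero, rF, stableStamp_zero, sub_zero]
    have : |e k + t| ≤ |a k| + |e k + t - a k| := by
      calc |e k + t| = |a k + (e k + t - a k)| := by ring_nf
        _ ≤ |a k| + |e k + t - a k| := abs_add_le _ _
    linarith
  | succ m ih =>
    intro k hk t a
    have hlt : k + 1 < n := by omega
    have hsplit : ∀ f : ℕ → ℝ, ∑ j ∈ Finset.Ico (k + 1) n, f j
        = f (k + 1) + ∑ j ∈ Finset.Ico (k + 2) n, f j := by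
      intro f; exact Finset.sum_eq_sum_Ico_succ_bot hlt f
    have hIH := ih (k + 1) (by omega) (a k) a
    have hcore := core (e k + t) (a k) (e (k + 1)) (e (k + 2) - sRec e n (k + 2))
    rw [rF_sRec e n he (k + 1)] at hcore
    rw [hsplit (fun j => |e j - sRec e n j|),
        hsplit (fun j => |a j| + |e j + a (j - 1) - a j|)]
    simp only [Nat.add_sub_cancel] at hIH ⊢
    linarith

/-! ### assembly -/

/-- padded version of a Fin-indexed function -/
def pad (f : Fin n → ℝ) : ℕ → ℝ := fun k => if h : k < n then f ⟨k, h⟩ else 0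

lemma pad_coe (f : Fin n → ℝ) (i : Fin n) : pad f (i : ℕ) = f i := by
  simp [pad, i.isLt]

lemma sum_pad (f : Fin n → ℝ) : ∑ i, f i = ∑ k ∈ Finset.range n, pad f k := by
  rw [← Fin.sum_univ_eq_sum_range (pad f) n]
  exact Finset.sum_congr rfl fun i _ => (pad_coe f i).symm

lemma flow_partial (τ : Fin n → ℝ) :
    ∀ j, ∀ hj : j < n, ∑ k ∈ Finset.range (j + 1), pad (flow τ) k = τ ⟨j, hj⟩ := by
  intro j
  induction j with
  | zero =>
    intro hj
    rw [Finset.sum_range_succ, Finset.sum_range_zero, zero_add]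
    rw [show pad (flow τ) 0 = flow τ ⟨0, hj⟩ from by simp [pad, hj]]
    simp [flow, prev]
  | succ j ih =>
    intro hj
    rw [Finset.sum_range_succ, ih (by omega)]
    rw [show pad (flow τ) (j+1) = flow τ ⟨j+1, hj⟩ from by simp [pad, hj]]
    rw [flow, prev]
    have h0 : ((⟨j+1, hj⟩ : Fin n) : ℕ) ≠ 0 := by simp
    rw [if_neg h0]
    have : (⟨((⟨j+1, hj⟩ : Fin n) : ℕ) - 1,
        lt_of_le_of_lt (Nat.sub_le _ _) (⟨j+1, hj⟩ : Fin n).isLt⟩ : Fin n) = ⟨j, by omega⟩ := by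
      apply Fin.ext; simp
    rw [this]
    ring

lemma filter_le_sum (f : Fin n → ℝ) (j : Fin n) :
    ∑ i ∈ Finset.univ.filter (fun i : Fin n => i ≤ j), f i
      = ∑ k ∈ Finset.range ((j : ℕ) + 1), pad f k := by
  rw [Finset.sum_filter]
  have h1 : ∑ i : Fin n, (if i ≤ j then f i else 0)
      = ∑ k ∈ Finset.range n, (if k ≤ (j : ℕ) then pad f k else 0) := by
    rw [← Fin.sum_univ_eq_sum_range (fun k => if k ≤ (j : ℕ) then pad f k else 0) n]
    refine Finset.sum_congr rfl fun i _ => ?_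
    rw [pad_coe]
    congr 1
  rw [h1]
  rw [← Finset.sum_subset (Finset.range_subset_range.mpr (show (j:ℕ)+1 ≤ n from j.isLt))
    (fun k _ hk => by rw [if_neg (by simp at hk ⊢; omega)])]
  refine Finset.sum_congr rfl fun k hk => ?_
  rw [if_pos (by simp at hk; omega)]

section MainProof

variable (γ σ : Fin n → ℝ)

/-- the error flow, padded -/
noncomputable def EE (γ σ : Fin n → ℝ) : ℕ → ℝ :=
  fun k => if h : k < n then flow σ ⟨k, h⟩ - flow γ ⟨k, h⟩ else 0

lemma EE_pad : EE γ σ = fun k => pad (flow σ) k - pad (flow γ) k := by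
  funext k
  by_cases h : k < n <;> simp [EE, pad, h]

lemma EE_zero : ∀ j, n ≤ j → EE γ σ j = 0 := by
  intro j hj; simp [EE, Nat.not_lt.mpr hj]

lemma EE_partial : ∀ j, ∀ hj : j < n,
    ∑ k ∈ Finset.range (j + 1), EE γ σ k = (σ ⟨j, hj⟩ - γ ⟨j, hj⟩) := by
  intro j hj
  rw [EE_pad, Finset.sum_sub_distrib, flow_partial σ j hj, flow_partial γ j hj]

/-- The lower bound half. -/
lemma lower_bound (ms : List (Move n)) (hms : applySeq ms γ = σ) :
    ∑ k ∈ Finset.range n, |EE γ σ k - sRec (EE γ σ) n k| ≤ seqCost ms := by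
  have hcost_nonneg : 0 ≤ seqCost ms := by
    apply List.sum_nonneg
    intro x hx
    obtain ⟨m, _, rfl⟩ := List.mem_map.mp hx
    cases m <;> exact abs_nonneg _
  rcases Nat.eq_zero_or_pos n with hn | hn
  · subst hn; simpa using hcost_nonneg
  set E := EE γ σ with hE
  set aN : ℕ → ℝ := fun k => if h : k < n then SA ms ⟨k, h⟩ else 0 with haN
  set DD : ℕ → ℝ := fun k => if h : k < n then DA ms ⟨k, h⟩ else 0 with hDD
  -- the delta identity
  have hδ : ∀ (j : ℕ) (hj : j < n),
      σ ⟨j, hj⟩ - γ ⟨j, hj⟩ = aN j + ∑ k ∈ Finset.range (j + 1), DD k := by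
    intro j hj
    have h1 : applySeq ms γ ⟨j, hj⟩ = σ ⟨j, hj⟩ := by rw [hms]
    rw [applySeq_eval, eff_decomp] at h1
    have h2 : aN j = SA ms ⟨j, hj⟩ := by simp [haN, hj]
    have h3 : (fun k => if h : k < n then DA ms ⟨k, h⟩ else 0) = pad (DA ms) := rfl
    rw [h2, ← h1, filter_le_sum (DA ms) ⟨j, hj⟩]
    simp only [hDD, h3]
    ring
  -- the recurrence for DD
  have hB : ∀ (j : ℕ), j < n → DD j = E j + (if j = 0 then 0 else aN (j - 1)) - aN j := by
    intro j hj
    cases j with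
    | zero =>
      have h1 := hδ 0 hj
      have h2 : E 0 = σ ⟨0, hj⟩ - γ ⟨0, hj⟩ := by
        have := EE_partial γ σ 0 hj
        rw [Finset.sum_range_succ, Finset.sum_range_zero, zero_add] at this
        rw [hE, this]
      rw [Finset.sum_range_succ, Finset.sum_range_zero, zero_add] at h1
      rw [if_pos rfl, h2]; linarith
    | succ m =>
      have hm : m < n := by omega
      have h1 := hδ (m + 1) hj
      have h0 := hδ m hm
      have h2 : E (m + 1) = (σ ⟨m+1, hj⟩ - γ ⟨m+1, hj⟩) - (σ ⟨m, hm⟩ - γ ⟨m, hm⟩) := by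
        have ha := EE_partial γ σ (m+1) hj
        have hb := EE_partial γ σ m hm
        rw [Finset.sum_range_succ, hb] at ha
        rw [hE]; linarith
      rw [Finset.sum_range_succ] at h1
      rw [if_neg (by omega : ¬ m + 1 = 0)]
      simp only [Nat.add_sub_cancel]
      rw [h2]; linarith
  -- cost lower bound by |aN| + |DD| sums
  have hc1 : (∑ k ∈ Finset.range n, (|aN k| + |DD k|)) ≤ seqCost ms := by
    have h1 : ∑ i, |SA ms i| = ∑ k ∈ Finset.range n, |aN k| := by
      rw [sum_pad (fun i => |SA ms i|)]
      refine Finset.sum_congr rfl fun k hk => ?_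
      simp only [Finset.mem_range] at hk
      simp [pad, haN, hk]
    have h2 : ∑ i, |DA ms i| = ∑ k ∈ Finset.range n, |DD k| := by
      rw [sum_pad (fun i => |DA ms i|)]
      refine Finset.sum_congr rfl fun k hk => ?_
      simp only [Finset.mem_range] at hk
      simp [pad, hDD, hk]
    have := cost_bound ms
    rw [h1, h2, ← Finset.sum_add_distrib] at this
    exact this
  -- apply tailLB
  have htail := tailLB E n (by rw [hE]; exact EE_zero γ σ) (n - 1) 0 (by omega) 0 aN
  rw [add_zero, rF_sRec E n (by rw [hE]; exact EE_zero γ σ) 0] at htail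
  -- match sums
  have hsplit : ∀ f : ℕ → ℝ, ∑ k ∈ Finset.range n, f k = f 0 + ∑ j ∈ Finset.Ico 1 n, f j := by
    intro f
    rw [Finset.range_eq_Ico]
    exact Finset.sum_eq_sum_Ico_succ_bot hn f
  have hL : ∑ k ∈ Finset.range n, |E k - sRec E n k|
      = (∑ j ∈ Finset.Ico (0 + 1) n, |E j - sRec E n j|) + |E 0 - sRec E n 0| := by
    rw [hsplit (fun k => |E k - sRec E n k|)]; norm_num; ring
  have hR : ∑ k ∈ Finset.range n, (|aN k| + |DD k|)
      = |aN 0| + |E 0 - aN 0|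
        + ∑ j ∈ Finset.Ico (0 + 1) n, (|aN j| + |E j + aN (j - 1) - aN j|) := by
    rw [hsplit (fun k => |aN k| + |DD k|)]
    have h0 : DD 0 = E 0 - aN 0 := by
      have := hB 0 hn
      rw [if_pos rfl] at this
      linarith
    have hj : ∀ j ∈ Finset.Ico (0 + 1) n, |aN j| + |DD j| = |aN j| + |E j + aN (j - 1) - aN j| := by
      intro j hjj
      simp only [Finset.mem_Ico] at hjj
      rw [hB j hjj.2, if_neg (by omega : ¬ j = 0)]
    rw [h0, Finset.sum_congr rfl hj]
  rw [hL]
  rw [hR] at hc1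
  linarith

noncomputable def sN (γ σ : Fin n → ℝ) : ℕ → ℝ := fun k => sRec (EE γ σ) n k

noncomputable def bN (γ σ : Fin n → ℝ) : ℕ → ℝ :=
  fun k => (EE γ σ k - sN γ σ k) + (if k = 0 then 0 else sN γ σ (k - 1))

noncomputable def msOpt (γ σ : Fin n → ℝ) : List (Move n) :=
  ((List.finRange n).map (fun i : Fin n => Move.stampM (sN γ σ i.val) i))
    ++ ((List.finRange n).map (fun i : Fin n => Move.delayM (bN γ σ i.val) i))

lemma SA_msOpt (i : Fin n) : SA (msOpt γ σ) i = sN γ σ (i : ℕ) := by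
  simp only [msOpt, SA, List.map_append, List.sum_append, List.map_map]
  rw [← Fin.sum_univ_def, ← Fin.sum_univ_def]
  simp only [Function.comp, stampPart]
  rw [Finset.sum_ite_eq' Finset.univ i (fun i' => sN γ σ (i' : ℕ))]
  simp

lemma DA_msOpt (i : Fin n) : DA (msOpt γ σ) i = bN γ σ (i : ℕ) := by
  simp only [msOpt, DA, List.map_append, List.sum_append, List.map_map]
  rw [← Fin.sum_univ_def, ← Fin.sum_univ_def]
  simp only [Function.comp, delayPart]
  rw [Finset.sum_ite_eq' Finset.univ i (fun i' => bN γ σ (i' : ℕ))]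
  simp

lemma teleB : ∀ j : ℕ, ∑ k ∈ Finset.range (j + 1), bN γ σ k
    = (∑ k ∈ Finset.range (j + 1), EE γ σ k) - sN γ σ j := by
  intro j
  induction j with
  | zero =>
    rw [Finset.sum_range_succ, Finset.sum_range_zero, Finset.sum_range_succ,
      Finset.sum_range_zero]
    simp [bN]
  | succ j ih =>
    rw [Finset.sum_range_succ, ih]
    have h2 : ∑ k ∈ Finset.range (j + 1 + 1), EE γ σ k
        = (∑ k ∈ Finset.range (j + 1), EE γ σ k) + EE γ σ (j + 1) := Finset.sum_range_succ _ _
    rw [h2]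
    simp only [bN, if_neg (by omega : ¬ j + 1 = 0), Nat.add_sub_cancel]
    ring

lemma msOpt_aligns : applySeq (msOpt γ σ) γ = σ := by
  funext j
  rw [applySeq_eval, eff_decomp, filter_le_sum (DA (msOpt γ σ)) j, SA_msOpt]
  have hpd : ∀ k ∈ Finset.range ((j : ℕ) + 1), pad (DA (msOpt γ σ)) k = bN γ σ k := by
    intro k hk
    simp only [Finset.mem_range] at hk
    have hkn : k < n := by omega
    rw [show pad (DA (msOpt γ σ)) k = DA (msOpt γ σ) ⟨k, hkn⟩ from by simp [pad, hkn]]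
    rw [DA_msOpt]
  rw [Finset.sum_congr rfl hpd, teleB γ σ (j : ℕ)]
  have := EE_partial γ σ (j : ℕ) j.isLt
  simp only [Fin.eta] at this
  rw [this]
  ring

lemma sN_last (hn : 0 < n) : sN γ σ (n - 1) = 0 := by
  rw [sN, sRec, dif_pos (by omega)]

lemma cost_id (hn : 0 < n) : ∀ m, 1 ≤ m → m ≤ n →
    ∑ k ∈ Finset.range m, (|sN γ σ k| + |bN γ σ k|)
      = (∑ k ∈ Finset.range m, |EE γ σ k - sN γ σ k|) + |sN γ σ (m - 1)| := by
  intro m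
  induction m with
  | zero => omega
  | succ m ih =>
    intro _ hm
    rcases Nat.eq_zero_or_pos m with hm0 | hm0
    · subst hm0
      rw [Finset.sum_range_succ, Finset.sum_range_zero, Finset.sum_range_succ,
        Finset.sum_range_zero]
      simp [bN]
      ring
    · rw [Finset.sum_range_succ, ih hm0 (by omega), Finset.sum_range_succ (f := fun k => |EE γ σ k - sN γ σ k|)]
      have hb : bN γ σ m = (EE γ σ m - sN γ σ m) + sN γ σ (m - 1) := by
        rw [bN, if_neg (by omega : ¬ m = 0)]
      have hs4 : |(EE γ σ m - sN γ σ m) + sN γ σ (m - 1)| + |sN γ σ (m - 1)|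
          = |EE γ σ m - sN γ σ m| := by
        have hsm : sN γ σ (m - 1) = stableStamp (EE γ σ (m - 1)) (EE γ σ m - sN γ σ m) := by
          rw [sN, sRec_eq (EE γ σ) n (EE_zero γ σ) (m - 1),
            show m - 1 + 1 = m from by omega]
          rfl
        rw [hsm]
        have := S4 (EE γ σ (m - 1)) (EE γ σ m - sN γ σ m)
        rw [add_comm (EE γ σ m - sN γ σ m)] at this ⊢
        exact this
      rw [hb, Nat.add_sub_cancel]
      linarith [hs4]

lemma msOpt_cost : seqCost (msOpt γ σ)
    = ∑ k ∈ Finset.range n, |EE γ σ k - sRec (EE γ σ) n k| := by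
  rcases Nat.eq_zero_or_pos n with hn | hn
  · subst hn
    simp [msOpt, seqCost, List.finRange_zero]
  have h1 : seqCost (msOpt γ σ) = ∑ k ∈ Finset.range n, (|sN γ σ k| + |bN γ σ k|) := by
    simp only [msOpt, seqCost, List.map_append, List.sum_append, List.map_map]
    rw [← Fin.sum_univ_def, ← Fin.sum_univ_def]
    simp only [Function.comp, Move.cost]
    rw [Fin.sum_univ_eq_sum_range (fun k => |sN γ σ k|) n,
      Fin.sum_univ_eq_sum_range (fun k => |bN γ σ k|) n,
      ← Finset.sum_add_distrib]
  rw [h1, cost_id γ σ hn n hn le_rfl, sN_last γ σ hn]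
  simp only [abs_zero, add_zero]
  rfl


end MainProof

end Aux

/-- correctness of the `d_N` computation algorithm:
`d_N(γ, σ) = Σ_{i=1}^{n} |r_i|` where `r_i = e_i - s_i` and `s` is given by the
stability recursion on `e_i = f_σ(i) - f_γ(i)`. -/
theorem statement12 (n : ℕ) (γ σ : Fin n → ℝ) :
    dN γ σ = ∑ i : Fin n,
      |(flow σ i - flow γ i) -
        sRec (fun k => if h : k < n then flow σ ⟨k, h⟩ - flow γ ⟨k, h⟩ else 0) n (i : ℕ)| := by
  have hEE : (fun k => if h : k < n then flow σ ⟨k, h⟩ - flow γ ⟨k, h⟩ else 0) = EE γ σ := rfl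
  rw [hEE]
  have hsum : ∑ i : Fin n, |(flow σ i - flow γ i) - sRec (EE γ σ) n (i : ℕ)|
      = ∑ k ∈ Finset.range n, |EE γ σ k - sRec (EE γ σ) n k| := by
    rw [← Fin.sum_univ_eq_sum_range (fun k => |EE γ σ k - sRec (EE γ σ) n k|) n]
    refine Finset.sum_congr rfl fun i _ => ?_
    have : EE γ σ (i : ℕ) = flow σ i - flow γ i := by simp [EE, i.isLt]
    rw [this]
  rw [hsum]
  have hle : IsLeast {c : ℝ | ∃ ms : List (Move n), applySeq ms γ = σ ∧ seqCost ms = c}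
      (∑ k ∈ Finset.range n, |EE γ σ k - sRec (EE γ σ) n k|) := by
    constructor
    · exact ⟨msOpt γ σ, msOpt_aligns γ σ, msOpt_cost γ σ⟩
    · rintro c ⟨ms, h1, rfl⟩
      exact lower_bound γ σ ms h1
  rw [dN]
  exact hle.csInf_eq

end TimedAlign
end
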